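/- arXiv:1012.4992 — 9 statements merged into one kernel-verified Lean document; each statement's English description precedes it below -/
import Mathlib

section
/- Let A be a type, let t : (ℕ → ℕ) → A be a continuous functional, and let s : ℕ → (ℕ → ℕ) be a weakly increasing chain. Then there exists n ∈ ℕ such that t (s m) = t (s n) for all m ≥ n (the Convergence Theorem: continuous functionals stabilize along weakly increasing chains of approximations). -/
/-!
Along a weakly increasing chain every coordinate is eventually constant: once some `s i n` is
nonzero, all later `s m n` equal it. A continuous functional reads only finitely many coordinates
of this pointwise limit, so it is eventually constant along the chain.
-/

/-- The pointwise information order on approximating functions: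
`f ≤ g` iff whenever `f n` is a non-default (nonzero) value, `g` agrees with it. -/
def FnLe (f g : ℕ → ℕ) : Prop := ∀ n, f n ≠ 0 → f n = g n

/-- A weakly increasing chain of functions. -/
def WeaklyIncreasing (s : ℕ → ℕ → ℕ) : Prop := ∀ i j, i ≤ j → FnLe (s i) (s j)

/-- A functional `t : (ℕ → ℕ) → A` is continuous if its value at any `f`
only depends on finitely many values of `f`. -/
def ContinuousFunctional {A : Type*} (t : (ℕ → ℕ) → A) : Prop :=
  ∀ f : ℕ → ℕ, ∃ A₀ : Finset ℕ, ∀ g : ℕ → ℕ, (∀ n ∈ A₀, g n = f n) → t g = t f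

open Filter

theorem WeaklyIncreasing.exists_eventually_eq {s : ℕ → ℕ → ℕ} (hs : WeaklyIncreasing s)
    (n : ℕ) : ∃ v, ∀ᶠ m in atTop, s m n = v := by
  by_cases h : ∃ i, s i n ≠ 0
  · obtain ⟨i, hi⟩ := h
    exact ⟨s i n, eventually_atTop.2 ⟨i, fun m hm => (hs i m hm n hi).symm⟩⟩
  · push Not at h
    exact ⟨0, Eventually.of_forall h⟩

theorem ContinuousFunctional.eventually_eq {A ι : Type*} {t : (ℕ → ℕ) → A}
    (ht : ContinuousFunctional t) {l : Filter ι} {g : ι → ℕ → ℕ} {f : ℕ → ℕ}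
    (hg : ∀ n, ∀ᶠ i in l, g i n = f n) : ∀ᶠ i in l, t (g i) = t f := by
  obtain ⟨A₀, hA₀⟩ := ht f
  filter_upwards [(eventually_all_finset A₀).2 fun n _ => hg n] with i hi
  exact hA₀ (g i) hi

/-- Convergence Theorem: continuous functionals stabilize along weakly
increasing chains of approximations. -/
theorem convergence_theorem {A : Type*} (t : (ℕ → ℕ) → A) (s : ℕ → ℕ → ℕ)
    (ht : ContinuousFunctional t) (hs : WeaklyIncreasing s) :
    ∃ n : ℕ, ∀ m : ℕ, n ≤ m → t (s m) = t (s n) := by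
  choose F hF using hs.exists_eventually_eq
  obtain ⟨n, hn⟩ := eventually_atTop.1 (ht.eventually_eq hF)
  exact ⟨n, fun m hm => (hn m hm).trans (hn n le_rfl).symm⟩
end

section
/- Every k-ary update procedure U (k ≥ 1) has a zero: there exists a k-tuple f = (f₁,…,f_k) of functions ℕ → ℕ with U f = ∅; moreover there is such a zero in which each f_i has finite support (f_i n ≠ 0 for only finitely many n). -/
/-!
Fix the first coordinate `f₀`. By induction on `k`, the restricted procedure on the remaining
coordinates has a zero `H f₀`; if `U` had no zero, `U (f₀, H f₀)` would therefore be an update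
`(0, N f₀, M f₀)` of the first coordinate. The update condition then says that writing the value
`M f₀` at `N f₀` always moves the request `N`. Iterating this along a well-order of `Set ι` gives
a sequence of first coordinates whose requests are pairwise distinct, i.e. an injection
`Set ι → ι`, which Cantor's theorem forbids.
-/

open Function

section UpdateChain

variable {ι β σ : Type*} [Nonempty β] (r : σ → σ → Prop) (N : (ι → β) → ι) (M : (ι → β) → β)

open Classical in
/-- Stage `b` writes, at each position requested by an earlier stage, the value that stage
requested. -/
noncomputable def updateChain [IsWellFounded σ r] : σ → ι → β :=
  IsWellFounded.fix r fun b chain p =>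
    if h : ∃ a : {a // r a b}, N (chain a a.2) = p then M (chain _ h.choose.2)
    else Classical.arbitrary β

open Classical in
theorem updateChain_apply [IsWellFounded σ r] (b : σ) (p : ι) :
    updateChain r N M b p =
      if h : ∃ a : {a // r a b}, N (updateChain r N M a) = p then M (updateChain r N M h.choose)
      else Classical.arbitrary β := by
  rw [updateChain, IsWellFounded.fix_eq]

variable {r N M}

theorem updateChain_apply_request [IsWellFounded σ r] {a b : σ} (hab : r a b)
    (hN : ∀ c, r c b → N (updateChain r N M c) = N (updateChain r N M a) → c = a) :
    updateChain r N M b (N (updateChain r N M a)) = M (updateChain r N M a) := by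
  have hex : ∃ c : {c // r c b}, N (updateChain r N M c) = N (updateChain r N M a) :=
    ⟨⟨a, hab⟩, rfl⟩
  rw [updateChain_apply, dif_pos hex, hN _ hex.choose.2 hex.choose_spec]

theorem updateChain_request_injective [IsWellOrder σ r]
    (hmove : ∀ f g : ι → β, g (N f) = M f → N g ≠ N f) :
    Injective fun b => N (updateChain r N M b) := by
  have hlt : ∀ b a, r a b → N (updateChain r N M b) ≠ N (updateChain r N M a) := by
    intro b
    induction b using IsWellFounded.induction r with
    | _ b ih =>
      intro a hab
      refine hmove _ _ (updateChain_apply_request hab fun c hcb hca => ?_)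
      rcases trichotomous_of r c a with hc | rfl | hc
      · exact absurd hca.symm (ih a hab c hc)
      · rfl
      · exact absurd hca (ih c hcb a hc)
  intro a b hab
  rcases trichotomous_of r a b with h | h | h
  · exact absurd hab.symm (hlt b a h)
  · exact h
  · exact absurd hab (hlt a b h)

end UpdateChain

theorem exists_update_keeping_request {ι β : Type*} [Nonempty β]
    (N : (ι → β) → ι) (M : (ι → β) → β) : ∃ f g : ι → β, g (N f) = M f ∧ N g = N f := by
  by_contra! hmove
  exact cantor_injective _ (updateChain_request_injective (r := WellOrderingRel) hmove)

section UpdateProcedure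

variable {ι β : Type*} {k : ℕ}

def UpdateCondition (U : (Fin k → ι → β) → Option (Fin k × ι × β)) : Prop :=
  ∀ (f g : Fin k → ι → β) (i : Fin k) (n : ι) (m : β) (h : ι) (l : β),
    (∀ j, j < i → f j = g j) → U f = some (i, n, m) → g i n = m → U g = some (i, h, l) → h ≠ n

/-- Fixing the first coordinate to `f₀`; updates of the first coordinate count as zeros. -/
def restrictHead (U : (Fin (k + 1) → ι → β) → Option (Fin (k + 1) × ι × β)) (f₀ : ι → β)
    (f : Fin k → ι → β) : Option (Fin k × ι × β) :=
  (U (Fin.cons f₀ f)).bind fun p => Fin.cases none (fun i => some (i, p.2)) p.1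

variable {U : (Fin (k + 1) → ι → β) → Option (Fin (k + 1) × ι × β)} {f₀ : ι → β}
  {f : Fin k → ι → β}

theorem restrictHead_eq_some {i : Fin k} {n : ι} {m : β} :
    restrictHead U f₀ f = some (i, n, m) ↔ U (Fin.cons f₀ f) = some (i.succ, n, m) := by
  rcases hUf : U (Fin.cons f₀ f) with _ | ⟨j, q⟩
  · simp [restrictHead, hUf]
  · cases j using Fin.cases <;> simp [restrictHead, hUf, Prod.ext_iff, (Fin.succ_ne_zero _).symm]

theorem exists_eq_some_zero_of_restrictHead_eq_none (h : restrictHead U f₀ f = none)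
    (hU : U (Fin.cons f₀ f) ≠ none) : ∃ n m, U (Fin.cons f₀ f) = some (0, n, m) := by
  rcases hUf : U (Fin.cons f₀ f) with _ | ⟨j, n, m⟩
  · exact absurd hUf hU
  · cases j using Fin.cases
    · exact ⟨n, m, rfl⟩
    · simp [restrictHead, hUf] at h

theorem UpdateCondition.restrict (hU : UpdateCondition U) (f₀ : ι → β) :
    UpdateCondition (restrictHead U f₀) := by
  intro f g i n m h l hfg hf hgn hg
  refine hU _ _ i.succ n m h l (fun j hj => ?_) (restrictHead_eq_some.1 hf) hgn
    (restrictHead_eq_some.1 hg)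
  cases j using Fin.cases with
  | zero => rfl
  | succ j => simpa using hfg j (Fin.succ_lt_succ_iff.1 hj)

theorem UpdateCondition.exists_eq_none_of_restrictHead [Nonempty β] (hU : UpdateCondition U)
    (hrestrict : ∀ f₀, ∃ f, restrictHead U f₀ f = none) : ∃ f, U f = none := by
  by_contra! hnone
  choose H hH using hrestrict
  choose N M hNM using fun f₀ => exists_eq_some_zero_of_restrictHead_eq_none (hH f₀) (hnone _)
  obtain ⟨f₀, g₀, hg₀, hN⟩ := exists_update_keeping_request N M
  exact hU _ _ 0 _ _ _ _ (fun j hj => absurd hj (Fin.not_lt_zero j)) (hNM f₀) hg₀ (hNM g₀) hN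

end UpdateProcedure

theorem UpdateCondition.exists_eq_none {ι β : Type*} [Nonempty β] :
    ∀ {k : ℕ} {U : (Fin k → ι → β) → Option (Fin k × ι × β)}, UpdateCondition U →
      ∃ f, U f = none
  | 0, U, _ => ⟨finZeroElim, by rcases U finZeroElim with _ | ⟨i, _⟩; exacts [rfl, i.elim0]⟩
  | _ + 1, _, hU =>
    hU.exists_eq_none_of_restrictHead fun f₀ => (hU.restrict f₀).exists_eq_none

theorem exists_finite_support_and_apply_eq {ι β γ : Type*} [Zero β] {k : ℕ}
    (F : (Fin k → ι → β) → γ) (f : Fin k → ι → β) (A : Finset (Fin k × ι))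
    (hA : ∀ g : Fin k → ι → β, (∀ p ∈ A, g p.1 p.2 = f p.1 p.2) → F g = F f) :
    ∃ g : Fin k → ι → β, (∀ i, {n | g i n ≠ 0}.Finite) ∧ F g = F f := by
  classical
  refine ⟨fun i n => if (i, n) ∈ A then f i n else 0, fun i => ?_, hA _ fun p hp => if_pos hp⟩
  refine (A.image Prod.snd).finite_toSet.subset fun n hn => ?_
  by_cases hin : (i, n) ∈ A
  · exact Finset.mem_image_of_mem Prod.snd hin
  · exact absurd (if_neg hin) hn

theorem zero_theorem_kary_update_procedure_general (k : ℕ)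
    (U : (Fin k → ℕ → ℕ) → Option (Fin k × ℕ × ℕ))
    -- continuity
    (hcont : ∀ f : Fin k → ℕ → ℕ, ∃ A : Finset (Fin k × ℕ),
      ∀ g : Fin k → ℕ → ℕ, (∀ p ∈ A, g p.1 p.2 = f p.1 p.2) → U g = U f)
    -- update condition
    (hupd : ∀ (f g : Fin k → ℕ → ℕ) (i : Fin k) (n m h l : ℕ),
      (∀ j : Fin k, j < i → f j = g j) →
      U f = some (i, n, m) → g i n = m → U g = some (i, h, l) → h ≠ n) :
    (∃ f : Fin k → ℕ → ℕ, U f = none) ∧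
    (∃ f : Fin k → ℕ → ℕ, (∀ i, {n : ℕ | f i n ≠ 0}.Finite) ∧ U f = none) := by
  obtain ⟨f, hf⟩ := UpdateCondition.exists_eq_none (U := U) hupd
  obtain ⟨A, hA⟩ := hcont f
  obtain ⟨g, hg_finite, hg⟩ := exists_finite_support_and_apply_eq U f A hA
  exact ⟨⟨f, hf⟩, g, hg_finite, hg.trans hf⟩

/-- Zero theorem for k-ary update procedures (Avigad): every k-ary update
procedure has a zero, and in fact one where each component has finite support. -/
theorem zero_theorem_kary_update_procedure (k : ℕ) (hk : 1 ≤ k)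
    (U : (Fin k → ℕ → ℕ) → Option (Fin k × ℕ × ℕ))
    -- continuity
    (hcont : ∀ f : Fin k → ℕ → ℕ, ∃ A : Finset (Fin k × ℕ),
      ∀ g : Fin k → ℕ → ℕ, (∀ p ∈ A, g p.1 p.2 = f p.1 p.2) → U g = U f)
    -- update condition
    (hupd : ∀ (f g : Fin k → ℕ → ℕ) (i : Fin k) (n m h l : ℕ),
      (∀ j : Fin k, j < i → f j = g j) →
      U f = some (i, n, m) → g i n = m → U g = some (i, h, l) → h ≠ n) :
    (∃ f : Fin k → ℕ → ℕ, U f = none) ∧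
    (∃ f : Fin k → ℕ → ℕ, (∀ i, {n : ℕ | f i n ≠ 0}.Finite) ∧ U f = none) :=
  zero_theorem_kary_update_procedure_general k U hcont hupd
end

section
/- Let α ≥ 1 be a countable ordinal. Every update procedure U of ordinal α has a finite zero: there exists a sequence f = (f_β)_{β<α} of functions ℕ → ℕ such that {(γ,n) : f_γ n ≠ 0} is finite and U f = ∅ (Zero Theorem for transfinite update procedures). -/
/-- Transfinite sequences of functions are modeled as functions on all ordinals;
an update procedure of ordinal `α` only depends on (and only updates) the
entries with index below `α`. -/
abbrev OSeq := Ordinal → ℕ → ℕ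

/-- `U` is an update procedure of ordinal `α`:
it is continuous (it depends only on finitely many values of its input, all of
index below `α`), it only outputs updates with index below `α`, and it satisfies
the update condition. -/
def IsUpdateProc (α : Ordinal) (U : OSeq → Option (Ordinal × ℕ × ℕ)) : Prop :=
  (∀ f : OSeq, ∃ A : Finset (Ordinal × ℕ), (∀ p ∈ A, p.1 < α) ∧
      ∀ g : OSeq, (∀ p ∈ A, g p.1 p.2 = f p.1 p.2) → U g = U f) ∧
  (∀ (f : OSeq) (β : Ordinal) (n m : ℕ), U f = some (β, n, m) → β < α) ∧
  (∀ (f g : OSeq) (β : Ordinal) (n m i j : ℕ),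
      (∀ γ, γ < β → f γ = g γ) →
      U f = some (β, n, m) → g β n = m → U g = some (β, i, j) → i ≠ n)

/-- A sequence is finite (below `α`) if it has nonzero values in only
finitely many places. -/
def OFinite (α : Ordinal) (f : OSeq) : Prop :=
  Set.Finite {p : Ordinal × ℕ | p.1 < α ∧ f p.1 p.2 ≠ 0}

/-!
Suppose `U` has no finite zero. Call `(c, F)` an approximation if `F` vanishes from level `c` on
and the run of `U` from `F` (carry out the update `U` asks for, reset all higher levels to `0`,
repeat) never stops and only updates levels `≥ c`. Runs from finite sequences stay finite, so
`(0, 0)` is an approximation.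

An approximation `(c, F)` extends to one at a higher level `d`, the least level below which the
run updates infinitely often. For `γ < d` the run eventually stops updating below `γ`, and from
then on the update condition lets it write each entry of level `γ` at most once; so the run
converges below `d`, and its limit is also the limit of the states right after the updates below
`d`, which vanish from `d` on. By continuity of `U`, the run from the limit copies the runs from
these states step by step, and an output that they all repeat has level `≥ d`, again by the
update condition.

Approximations along a chain pass to the limit by the same continuity argument, so Zorn's lemma
yields a maximal approximation, contradicting the extension step.
-/

open Filter Topology

theorem exists_minimal_infinite_setOf_lt {β : Type*} [LinearOrder β] [WellFoundedLT β]
    {s : ℕ → β} {b : β} (hb : {j | s j < b}.Infinite) :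
    ∃ d, {j | s j < d}.Infinite ∧ ∀ γ < d, ∀ᶠ j in atTop, γ ≤ s j := by
  obtain ⟨d, hd_inf, hd_min⟩ := wellFounded_lt.has_min {d | {j | s j < d}.Infinite} ⟨b, hb⟩
  refine ⟨d, hd_inf, fun γ hγ => ?_⟩
  simpa [← Nat.cofinite_eq_atTop] using
    (Set.not_infinite.1 fun h => hd_min γ h hγ).eventually_cofinite_notMem

theorem tendsto_nhds_iff_eventually_apply_eq {ι : Type*} {L : Filter ι} {q : ι → OSeq}
    {G : OSeq} : Tendsto q L (𝓝 G) ↔ ∀ γ k, ∀ᶠ i in L, q i γ k = G γ k := by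
  simp [tendsto_pi_nhds, nhds_discrete]

namespace UpdateProc

noncomputable section

variable {α : Ordinal} {U : OSeq → Option (Ordinal × ℕ × ℕ)}

def reset (f : OSeq) (β : Ordinal) (n m : ℕ) : OSeq := fun γ k =>
  if γ < β then f γ k else if γ = β then (if k = n then m else f γ k) else 0

def applyUpdate (f : OSeq) : Option (Ordinal × ℕ × ℕ) → OSeq
  | some (β, n, m) => reset f β n m
  | none => f

def run (U : OSeq → Option (Ordinal × ℕ × ℕ)) (F : OSeq) (l : ℕ) : OSeq :=
  (fun f => applyUpdate f (U f))^[l] F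

def RunsAbove (U : OSeq → Option (Ordinal × ℕ × ℕ)) (c : Ordinal) (F : OSeq) : Prop :=
  ∀ l, ∃ x : Ordinal × ℕ × ℕ, U (run U F l) = some x ∧ c ≤ x.1

def IsApprox (U : OSeq → Option (Ordinal × ℕ × ℕ)) (p : Ordinal × OSeq) : Prop :=
  (∀ γ, p.1 ≤ γ → p.2 γ = 0) ∧ RunsAbove U p.1 p.2

def Extends (p q : Ordinal × OSeq) : Prop :=
  p.1 ≤ q.1 ∧ ∀ γ < p.1, q.2 γ = p.2 γ

theorem Extends.refl (p : Ordinal × OSeq) : Extends p p :=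
  ⟨le_rfl, fun _ _ => rfl⟩

theorem Extends.trans {p q r : Ordinal × OSeq} (hpq : Extends p q) (hqr : Extends q r) :
    Extends p r :=
  ⟨hpq.1.trans hqr.1, fun γ hγ => (hqr.2 γ (hγ.trans_le hpq.1)).trans (hpq.2 γ hγ)⟩

instance : Std.Refl Extends :=
  ⟨Extends.refl⟩

section Reset

variable {f g : OSeq} {β γ : Ordinal} {n m k : ℕ}

theorem reset_apply_of_lt (h : γ < β) : reset f β n m γ = f γ := by
  funext k
  simp [reset, h]

theorem reset_apply_of_gt (h : β < γ) (k : ℕ) : reset f β n m γ k = 0 := by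
  simp [reset, h.not_gt, h.ne']

theorem reset_apply_self : reset f β n m β n = m := by
  simp [reset]

theorem reset_apply_eq_self (h : γ < β ∨ γ = β ∧ k ≠ n) : reset f β n m γ k = f γ k := by
  rcases h with h | ⟨rfl, hk⟩
  · rw [reset_apply_of_lt h]
  · simp [reset, hk]

theorem applyUpdate_apply_congr (h : f γ k = g γ k) (u : Option (Ordinal × ℕ × ℕ)) :
    applyUpdate f u γ k = applyUpdate g u γ k := by
  rcases u with _ | ⟨β, n, m⟩ <;> simp [applyUpdate, reset, h]

theorem _root_.OFinite.reset (hf : OFinite α f) (β : Ordinal) (n m : ℕ) :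
    OFinite α (reset f β n m) := by
  refine (hf.insert (β, n)).subset ?_
  rintro ⟨γ, k⟩ ⟨hγα, hne⟩
  simp only [UpdateProc.reset] at hne
  split_ifs at hne <;> simp_all

theorem _root_.OFinite.applyUpdate (hf : OFinite α f) (u : Option (Ordinal × ℕ × ℕ)) :
    OFinite α (applyUpdate f u) := by
  rcases u with _ | ⟨β, n, m⟩
  exacts [hf, hf.reset β n m]

end Reset

theorem run_succ (F : OSeq) (l : ℕ) :
    run U F (l + 1) = applyUpdate (run U F l) (U (run U F l)) :=
  Function.iterate_succ_apply' _ _ _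

theorem run_run (F : OSeq) (j l : ℕ) : run U (run U F j) l = run U F (l + j) :=
  (Function.iterate_add_apply _ _ _ _).symm

theorem _root_.OFinite.run {F : OSeq} (hF : OFinite α F) (l : ℕ) : OFinite α (run U F l) := by
  induction l with
  | zero => exact hF
  | succ l ih => rw [run_succ]; exact ih.applyUpdate _

section Stages

variable {F : OSeq} {o : ℕ → Ordinal × ℕ × ℕ}

theorem run_succ_of_output (ho : ∀ j, U (run U F j) = some (o j)) (j : ℕ) :
    run U F (j + 1) = reset (run U F j) (o j).1 (o j).2.1 (o j).2.2 := by
  rw [run_succ, ho]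
  rfl

theorem run_apply_eq_of_untouched (ho : ∀ j, U (run U F j) = some (o j)) {p q : ℕ}
    {γ : Ordinal} {k : ℕ} (hpq : p ≤ q)
    (h : ∀ j, p ≤ j → j < q → γ < (o j).1 ∨ γ = (o j).1 ∧ k ≠ (o j).2.1) :
    run U F q γ k = run U F p γ k := by
  induction q, hpq using Nat.le_induction with
  | base => rfl
  | succ q hpq ih =>
    rw [run_succ_of_output ho, reset_apply_eq_self (h q hpq q.lt_succ_self),
      ih fun j hpj hjq => h j hpj (hjq.trans q.lt_succ_self)]

-- By induction on `q`, the value written at stage `p` is still in place at stage `q`, so the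
-- update condition applies to the stages `p` and `q`.
theorem _root_.IsUpdateProc.output_index_ne (hU : IsUpdateProc α U)
    (ho : ∀ j, U (run U F j) = some (o j)) {K : ℕ} {b : Ordinal}
    (hK : ∀ j, K ≤ j → b ≤ (o j).1) {p q : ℕ} (hp : K ≤ p) (hpq : p < q)
    (hpb : (o p).1 = b) (hqb : (o q).1 = b) : (o q).2.1 ≠ (o p).2.1 := by
  induction q using Nat.strong_induction_on with
  | _ q ih =>
  have hval : run U F q b (o p).2.1 = (o p).2.2 := by
    rw [run_apply_eq_of_untouched ho hpq fun j hpj hjq => ?_, run_succ_of_output ho, hpb,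
      reset_apply_self]
    rcases (hK j (by omega)).lt_or_eq with hlt | heq
    · exact .inl hlt
    · exact .inr ⟨heq, (ih j hjq hpj heq.symm).symm⟩
  have hlow : ∀ γ < b, run U F p γ = run U F q γ := fun γ hγ => funext fun k =>
    (run_apply_eq_of_untouched ho hpq.le fun j hpj _ =>
      .inl (hγ.trans_le (hK j (hp.trans hpj)))).symm
  refine hU.2.2 _ _ b _ _ _ (o q).2.2 hlow ?_ hval ?_
  · rw [ho, ← hpb]
  · rw [ho, ← hqb]

theorem _root_.IsUpdateProc.exists_eventually_run_apply_eq (hU : IsUpdateProc α U)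
    (ho : ∀ j, U (run U F j) = some (o j)) {γ : Ordinal}
    (hγ : ∀ᶠ j in atTop, γ ≤ (o j).1) (k : ℕ) : ∃ v, ∀ᶠ j in atTop, run U F j γ k = v := by
  obtain ⟨K, hK⟩ := eventually_atTop.1 hγ
  suffices ∃ N, ∀ j, N ≤ j → γ < (o j).1 ∨ γ = (o j).1 ∧ k ≠ (o j).2.1 by
    obtain ⟨N, hN⟩ := this
    exact ⟨run U F N γ k, eventually_atTop.2
      ⟨N, fun j hj => run_apply_eq_of_untouched ho hj fun i hi _ => hN i hi⟩⟩
  by_cases hset : ∃ p, K ≤ p ∧ (o p).1 = γ ∧ (o p).2.1 = k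
  · obtain ⟨p, hKp, hpγ, rfl⟩ := hset
    refine ⟨p + 1, fun j hj => (hK j (by omega)).lt_or_eq.imp id fun heq => ⟨heq, ?_⟩⟩
    exact (hU.output_index_ne ho hK hKp hj hpγ heq.symm).symm
  · push Not at hset
    exact ⟨K, fun j hj => (hK j hj).lt_or_eq.imp id fun heq =>
      ⟨heq, fun h => hset j hj heq.symm h.symm⟩⟩

theorem _root_.IsUpdateProc.finite_setOf_output_eq (hU : IsUpdateProc α U)
    (ho : ∀ j, U (run U F j) = some (o j)) {x : Ordinal × ℕ × ℕ}
    (hx : ∀ᶠ j in atTop, x.1 ≤ (o j).1) : {j | o j = x}.Finite := by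
  obtain ⟨K, hK⟩ := eventually_atTop.1 hx
  have hsub : {j | K ≤ j ∧ o j = x}.Subsingleton := by
    have key : ∀ p q, K ≤ p → p < q → o p = x → o q ≠ x := fun p q hp hpq hpx hqx =>
      hU.output_index_ne ho hK hp hpq (by rw [hpx]) (by rw [hqx]) (by rw [hpx, hqx])
    rintro p ⟨hp, hpx⟩ q ⟨hq, hqx⟩
    by_contra hne
    rcases lt_or_gt_of_ne hne with hpq | hqp
    exacts [key p q hp hpq hpx hqx, key q p hq hqp hqx hpx]
  refine ((Set.finite_Iio K).union hsub.finite).subset fun j hj => ?_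
  by_cases hKj : K ≤ j
  exacts [.inr ⟨hKj, hj⟩, .inl (not_le.1 hKj)]

theorem _root_.IsUpdateProc.le_of_frequently_output_eq (hU : IsUpdateProc α U)
    (ho : ∀ j, U (run U F j) = some (o j)) {d : Ordinal}
    (hd : ∀ γ < d, ∀ᶠ j in atTop, γ ≤ (o j).1) {x : Ordinal × ℕ × ℕ}
    (hx : ∃ᶠ j in atTop, o j = x) : d ≤ x.1 := by
  by_contra! hxd
  exact Nat.frequently_atTop_iff_infinite.1 hx (hU.finite_setOf_output_eq ho (hd _ hxd))

end Stages

section Convergence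

variable {ι : Type*} {L : Filter ι} {q : ι → OSeq} {G : OSeq}

theorem _root_.IsUpdateProc.eventually_eq_of_tendsto (hU : IsUpdateProc α U)
    (hq : Tendsto q L (𝓝 G)) : ∀ᶠ i in L, U (q i) = U G := by
  obtain ⟨A, -, hA⟩ := hU.1 G
  filter_upwards [(eventually_all_finset A).2 fun p _ =>
    tendsto_nhds_iff_eventually_apply_eq.1 hq p.1 p.2] with i hi using hA _ hi

theorem _root_.IsUpdateProc.tendsto_run (hU : IsUpdateProc α U) (hq : Tendsto q L (𝓝 G))
    (l : ℕ) : Tendsto (fun i => run U (q i) l) L (𝓝 (run U G l)) := by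
  induction l with
  | zero => exact hq
  | succ l ih =>
    refine tendsto_nhds_iff_eventually_apply_eq.2 fun γ k => ?_
    filter_upwards [hU.eventually_eq_of_tendsto ih,
      tendsto_nhds_iff_eventually_apply_eq.1 ih γ k] with i hUi hi
    rw [run_succ, run_succ, hUi]
    exact applyUpdate_apply_congr hi _

theorem _root_.IsUpdateProc.runsAbove_of_tendsto [L.NeBot] (hU : IsUpdateProc α U)
    {d : Ordinal} (halive : ∀ i l, U (run U (q i) l) ≠ none) (hq : Tendsto q L (𝓝 G))
    (hlev : ∀ l x, (∀ᶠ i in L, U (run U (q i) l) = some x) → d ≤ x.1) : RunsAbove U d G := by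
  intro l
  have hl := hU.eventually_eq_of_tendsto (hU.tendsto_run hq l)
  obtain ⟨i, hi⟩ := hl.exists
  obtain ⟨x, hx⟩ := Option.ne_none_iff_exists'.1 (hi ▸ halive i l)
  exact ⟨x, hx, hlev l x (hl.mono fun i hi => hi.trans hx)⟩

end Convergence

theorem RunsAbove.lt (hU : IsUpdateProc α U) {c : Ordinal} {F : OSeq} (h : RunsAbove U c F) :
    c < α := by
  obtain ⟨x, hx, hcx⟩ := h 0
  exact hcx.trans_lt (hU.2.1 _ _ _ _ hx)

theorem isApprox_zero (hnz : ∀ f, OFinite α f → U f ≠ none) : IsApprox U (0, 0) := by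
  have hfin : OFinite α (0 : OSeq) := by simp [OFinite]
  refine ⟨fun _ _ => rfl, fun l => ?_⟩
  obtain ⟨x, hx⟩ := Option.ne_none_iff_exists'.1 (hnz _ (hfin.run l))
  exact ⟨x, hx, zero_le⟩

theorem _root_.IsUpdateProc.exists_extends_of_isApprox (hU : IsUpdateProc α U)
    {p : Ordinal × OSeq} (hp : IsApprox U p) :
    ∃ p', IsApprox U p' ∧ Extends p p' ∧ p.1 < p'.1 := by
  obtain ⟨c, F⟩ := p
  choose o ho hco using hp.2
  obtain ⟨d, hd_inf, hd⟩ := exists_minimal_infinite_setOf_lt (s := fun j => (o j).1) (b := α)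
    (by simpa [fun j => hU.2.1 _ _ _ _ (ho j)] using Set.infinite_univ)
  have hcd : c < d := not_le.1 fun hdc =>
    hd_inf (Set.finite_empty.subset fun j hj => ((hco j).trans_lt (hj.trans_le hdc)).false)
  choose! v hv using fun γ (hγ : γ < d) k => hU.exists_eventually_run_apply_eq ho (hd γ hγ) k
  -- index `j` stands for the state `run U F (j + 1)` right after an update below `d`
  let L := atTop ⊓ 𝓟 {j | (o j).1 < d}
  have : L.NeBot := frequently_iff_neBot.1 (Nat.frequently_atTop_iff_infinite.2 hd_inf)
  refine ⟨(d, fun γ => if γ < d then v γ else 0), ⟨fun γ hγ => if_neg hγ.not_gt,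
    hU.runsAbove_of_tendsto (L := L) (q := fun j => run U F (j + 1)) ?_
      (tendsto_nhds_iff_eventually_apply_eq.2 fun γ k => ?_) ?_⟩,
    ⟨hcd.le, fun γ hγ => ?_⟩, hcd⟩
  · intro j l
    simp [run_run, ho]
  · by_cases hγ : γ < d
    · filter_upwards [((tendsto_add_atTop_nat 1).eventually (hv γ hγ k)).filter_mono inf_le_left]
        with j hj
      simp [hj, hγ]
    · filter_upwards [mem_inf_of_right (mem_principal_self _)] with j hj
      simp [run_succ_of_output ho, reset_apply_of_gt (hj.trans_le (not_lt.1 hγ)), hγ]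
  · intro l x hx
    have hshift : Tendsto (fun j => l + (j + 1)) atTop atTop :=
      tendsto_atTop_mono (fun j => by dsimp only [id]; omega) tendsto_id
    refine hU.le_of_frequently_output_eq ho hd (hshift.frequently
      ((hx.frequently.filter_mono inf_le_left).mono fun j hj => ?_))
    rwa [run_run, ho, Option.some_inj] at hj
  · have hγd : γ < d := hγ.trans hcd
    funext k
    obtain ⟨j, hj⟩ := (hv γ hγd k).exists
    simp only [if_pos hγd, ← hj]
    exact run_apply_eq_of_untouched ho (Nat.zero_le j) fun i _ _ => .inl (hγ.trans_le (hco i))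

def chainLimit (C : Set (Ordinal × OSeq)) : OSeq := fun γ =>
  open Classical in if h : ∃ p ∈ C, γ < p.1 then h.choose.2 γ else 0

theorem chainLimit_apply_of_lt {C : Set (Ordinal × OSeq)} (hC : IsChain Extends C)
    {p : Ordinal × OSeq} (hp : p ∈ C) {γ : Ordinal} (hγ : γ < p.1) :
    chainLimit C γ = p.2 γ := by
  have h : ∃ p ∈ C, γ < p.1 := ⟨p, hp, hγ⟩
  simp only [chainLimit, dif_pos h]
  rcases hC.total h.choose_spec.1 hp with hext | hext
  exacts [(hext.2 γ h.choose_spec.2).symm, hext.2 γ hγ]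

theorem chainLimit_apply_of_forall_le {C : Set (Ordinal × OSeq)} {γ : Ordinal}
    (hγ : ∀ p ∈ C, p.1 ≤ γ) : chainLimit C γ = 0 := by
  have h : ¬∃ p ∈ C, γ < p.1 := fun ⟨p, hp, hlt⟩ => (hγ p hp).not_gt hlt
  simp only [chainLimit, dif_neg h]

theorem _root_.IsUpdateProc.exists_upperBound_of_isChain (hU : IsUpdateProc α U)
    {C : Set (Ordinal × OSeq)} (hCA : ∀ p ∈ C, IsApprox U p) (hC : IsChain Extends C)
    (hne : C.Nonempty) : ∃ ub, IsApprox U ub ∧ ∀ p ∈ C, Extends p ub := by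
  have : Nonempty C := hne.to_subtype
  let L : Filter C := ⨅ p : C, 𝓟 {q | Extends p.1 q.1}
  have hL : ∀ p : C, ∀ᶠ q in L, Extends p.1 q.1 := fun p =>
    mem_iInf_of_mem p (mem_principal_self _)
  have : L.NeBot := by
    refine iInf_neBot_of_directed' (fun p q => ?_) fun p =>
      principal_neBot_iff.2 ⟨p, Extends.refl _⟩
    rcases hC.total p.2 q.2 with hpq | hqp
    · exact ⟨q, principal_mono.2 fun r hr => hpq.trans hr, le_rfl⟩
    · exact ⟨p, le_rfl, principal_mono.2 fun r hr => hqp.trans hr⟩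
  have hbdd : BddAbove (Set.range fun p : C => p.1.1) :=
    ⟨α, Set.forall_mem_range.2 fun p => ((hCA _ p.2).2.lt hU).le⟩
  have hle : ∀ p ∈ C, p.1 ≤ ⨆ p : C, p.1.1 := fun p hp => le_ciSup hbdd ⟨p, hp⟩
  refine ⟨(⨆ p : C, p.1.1, chainLimit C), ⟨fun γ hγ =>
      chainLimit_apply_of_forall_le fun p hp => (hle p hp).trans hγ,
    hU.runsAbove_of_tendsto (L := L) (q := fun p => p.1.2) (fun p l => ?_)
      (tendsto_nhds_iff_eventually_apply_eq.2 fun γ k => ?_) fun l x hx => ?_⟩,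
    fun p hp => ⟨hle p hp, fun γ => chainLimit_apply_of_lt hC hp⟩⟩
  · obtain ⟨x, hx, -⟩ := (hCA _ p.2).2 l
    simp [hx]
  · by_cases h : ∃ p ∈ C, γ < p.1
    · obtain ⟨p, hp, hpγ⟩ := h
      filter_upwards [hL ⟨p, hp⟩] with q hq
      rw [hq.2 γ hpγ, chainLimit_apply_of_lt hC hp hpγ]
    · push Not at h
      refine .of_forall fun q => ?_
      simp only [(hCA _ q.2).1 γ (h _ q.2), chainLimit_apply_of_forall_le h]
  · refine ciSup_le fun p => ?_
    obtain ⟨q, hpq, hqx⟩ := ((hL p).and hx).exists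
    obtain ⟨y, hy, hqy⟩ := (hCA _ q.2).2 l
    rw [hqx, Option.some_inj] at hy
    exact hpq.1.trans (hy ▸ hqy)

end

end UpdateProc

open UpdateProc in
theorem zero_theorem_transfinite_update_procedure_general (α : Ordinal)
    (U : OSeq → Option (Ordinal × ℕ × ℕ)) (hU : IsUpdateProc α U) :
    ∃ f : OSeq, OFinite α f ∧ U f = none := by
  by_contra! hnz
  have : Nonempty {p // IsApprox U p} := ⟨⟨(0, 0), isApprox_zero hnz⟩⟩
  obtain ⟨m, hm⟩ := exists_maximal_of_nonempty_chains_bounded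
    (r := fun p q : {p // IsApprox U p} => Extends p.1 q.1)
    (fun C hC hne => by
      obtain ⟨ub, hub, hCub⟩ := hU.exists_upperBound_of_isChain (C := Subtype.val '' C)
        (by rintro _ ⟨p, -, rfl⟩; exact p.2)
        (hC.image_of_map_rel _ Extends Subtype.val fun _ _ => id) (hne.image _)
      exact ⟨⟨ub, hub⟩, fun p hp => hCub _ ⟨p, hp, rfl⟩⟩)
    Extends.trans
  obtain ⟨p, hp, hmp, hlt⟩ := hU.exists_extends_of_isApprox m.2
  exact (hm ⟨p, hp⟩ hmp).1.not_gt hlt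

/-- Zero Theorem for transfinite update procedures: every update procedure of
countable ordinal `α ≥ 1` has a finite zero. -/
theorem zero_theorem_transfinite_update_procedure (α : Ordinal)
    (hα : 1 ≤ α) (hcount : α.card ≤ Cardinal.aleph0)
    (U : OSeq → Option (Ordinal × ℕ × ℕ)) (hU : IsUpdateProc α U) :
    ∃ f : OSeq, OFinite α f ∧ U f = none :=
  zero_theorem_transfinite_update_procedure_general α U hU
end

section
/- Let α ≥ 1 be a countable ordinal and U an update procedure of ordinal α. Then the learning process generated by U terminates: there exists k ∈ ℕ such that U(U^(k)) = ∅; in particular U^(k) is a finite zero of U (Termination of Learning Processes). -/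
/-- Controlled update `f ⊕ u`: update the `γ`-th function at `n` to value `m`
and erase (reset to `0`) everything of higher index. -/
noncomputable def oplus (f : OSeq) : Option (Ordinal × ℕ × ℕ) → OSeq
  | none => f
  | some (γ, n, m) => fun β x =>
      if β < γ then f β x
      else if β = γ then (if x = n then m else f β x)
      else 0

/-- The learning process generated by `U`:
`U^(0)` is the constantly `0` sequence and `U^(i+1) = U^(i) ⊕ U(U^(i))`. -/
noncomputable def learnProc (U : OSeq → Option (Ordinal × ℕ × ℕ)) : ℕ → OSeq
  | 0 => fun _ _ => 0
  | i + 1 => oplus (learnProc U i) (U (learnProc U i))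

/-!
Suppose the process never stops, and call `(θ, x)` divergent when `x` vanishes from level `θ` on
and the process started at `x` runs forever, updating only at levels `≥ θ`. A divergent `(θ, x)`
extends to a divergent `(δ, g)` with `θ < δ`: let `δ` be the least ordinal such that updates below
`δ` happen infinitely often. Below `δ` every coordinate is eventually constant, since once no update
falls below `γ` the update condition forbids writing twice at the same place `(γ, n)`; let `g` be
the limit. By continuity the process started at `g` is replayed right after each of the infinitely
many updates below `δ`, so it never stops, and an update of it below `δ` would be repeated
infinitely often. Divergent pairs along a chain glue together, again by continuity, so Zorn's lemma
gives a maximal divergent pair, contradicting the extension step.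
-/

open Filter

theorem exists_mem_forall_lt_of_lt_csSup {β ι : Type*} [ConditionallyCompleteLinearOrder β]
    {s : Set β} (hs : s.Nonempty) (t : Finset ι) (f : ι → β) :
    ∃ b ∈ s, ∀ i ∈ t, f i < sSup s → f i < b := by
  classical
  induction t using Finset.induction_on with
  | empty =>
    obtain ⟨b, hb⟩ := hs
    exact ⟨b, hb, by simp⟩
  | insert a t _ ih =>
    obtain ⟨b, hb, hbt⟩ := ih
    simp only [Finset.mem_insert, forall_eq_or_imp]
    by_cases ha : f a < sSup s
    · obtain ⟨b', hb', hab'⟩ := exists_lt_of_lt_csSup hs ha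
      refine ⟨max b b', max_rec' (· ∈ s) hb hb', fun _ => ?_, ?_⟩
      · exact lt_max_of_lt_right hab'
      · exact fun i hi hi' => lt_max_of_lt_left (hbt i hi hi')
    · exact ⟨b, hb, fun h => absurd h ha, hbt⟩

section Oplus

variable {f f' : OSeq} {α γ β : Ordinal} {n n' m : ℕ}

theorem oplus_congr_apply (u : Option (Ordinal × ℕ × ℕ)) (h : f γ n = f' γ n) :
    oplus f u γ n = oplus f' u γ n := by
  rcases u with _ | ⟨β, n', m⟩
  · exact h
  · simp only [oplus, h]

theorem oplus_apply_self : oplus f (some (γ, n, m)) γ n = m := by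
  simp [oplus]

theorem oplus_apply_of_lt (h : β < γ) : oplus f (some (β, n', m)) γ n = 0 := by
  simp [oplus, h.not_gt, h.ne']

theorem oplus_apply_of_le_of_ne (h : γ ≤ β) (hne : (β, n') ≠ (γ, n)) :
    oplus f (some (β, n', m)) γ n = f γ n := by
  rcases h.lt_or_eq with h | rfl
  · simp [oplus, h]
  · simp_all [oplus, eq_comm]

theorem OFinite.oplus (hf : OFinite α f) (u : Option (Ordinal × ℕ × ℕ)) :
    OFinite α (oplus f u) := by
  rcases u with _ | ⟨β, n', m⟩
  · exact hf
  refine (hf.union (Set.finite_singleton (β, n'))).subset ?_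
  rintro ⟨γ, n⟩ ⟨hγ, hne⟩
  by_cases hw : (β, n') = (γ, n)
  · exact Or.inr hw.symm
  rcases le_or_gt γ β with h | h
  · exact Or.inl ⟨hγ, by rwa [oplus_apply_of_le_of_ne h hw] at hne⟩
  · exact absurd (oplus_apply_of_lt h) hne

end Oplus

namespace LearningProcess

variable {U : OSeq → Option (Ordinal × ℕ × ℕ)} {α : Ordinal}

noncomputable def runFrom (U : OSeq → Option (Ordinal × ℕ × ℕ)) (x : OSeq) : ℕ → OSeq
  | 0 => x
  | t + 1 => oplus (runFrom U x t) (U (runFrom U x t))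

theorem runFrom_succ (x : OSeq) (t : ℕ) :
    runFrom U x (t + 1) = oplus (runFrom U x t) (U (runFrom U x t)) := rfl

theorem learnProc_eq_runFrom (U : OSeq → Option (Ordinal × ℕ × ℕ)) :
    learnProc U = runFrom U (fun _ _ => 0) := by
  funext k
  induction k with
  | zero => rfl
  | succ k ih => rw [learnProc, runFrom_succ, ih]

theorem runFrom_add (x : OSeq) (s t : ℕ) :
    runFrom U x (s + t) = runFrom U (runFrom U x s) t := by
  induction t with
  | zero => rfl
  | succ t ih => rw [← add_assoc, runFrom_succ, ih, runFrom_succ]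

theorem oFinite_learnProc (U : OSeq → Option (Ordinal × ℕ × ℕ)) (α : Ordinal) (k : ℕ) :
    OFinite α (learnProc U k) := by
  induction k with
  | zero => simp [OFinite, learnProc]
  | succ k ih => exact ih.oplus _

section Run

variable {x y : OSeq} {γ : Ordinal} {n : ℕ}

theorem runFrom_apply_eq_of_le {s e : ℕ} (hse : s ≤ e)
    (h : ∀ t, s ≤ t → t < e → ∀ u ∈ U (runFrom U x t), γ ≤ u.1 ∧ (u.1, u.2.1) ≠ (γ, n)) :
    runFrom U x e γ n = runFrom U x s γ n := by
  induction e, hse using Nat.le_induction with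
  | base => rfl
  | succ e hse ih =>
    rw [runFrom_succ, ← ih fun t h₁ h₂ => h t h₁ (by omega)]
    rcases hu : U (runFrom U x e) with _ | ⟨β, n', m⟩
    · rfl
    · obtain ⟨hγ, hne⟩ := h e hse e.lt_succ_self _ hu
      exact oplus_apply_of_le_of_ne hγ hne

theorem runFrom_apply_eq_of_lt {s e : ℕ} (hse : s ≤ e)
    (h : ∀ t, s ≤ t → t < e → ∀ u ∈ U (runFrom U x t), γ < u.1) :
    runFrom U x e γ n = runFrom U x s γ n :=
  runFrom_apply_eq_of_le hse fun t h₁ h₂ u hu =>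
    ⟨(h t h₁ h₂ u hu).le, fun he => (h t h₁ h₂ u hu).ne' (congrArg Prod.fst he)⟩

theorem runFrom_apply_congr (hxy : x γ n = y γ n) {j : ℕ}
    (hU : ∀ i < j, U (runFrom U x i) = U (runFrom U y i)) :
    runFrom U x j γ n = runFrom U y j γ n := by
  induction j with
  | zero => exact hxy
  | succ j ih =>
    rw [runFrom_succ, runFrom_succ, hU j j.lt_succ_self]
    exact oplus_congr_apply _ (ih fun i hi => hU i (by omega))

theorem exists_finset_update_runFrom_eq (hU : IsUpdateProc α U) (y : OSeq) (j : ℕ) :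
    ∃ A : Finset (Ordinal × ℕ), ∀ x : OSeq, (∀ p ∈ A, x p.1 p.2 = y p.1 p.2) →
      ∀ i ≤ j, U (runFrom U x i) = U (runFrom U y i) := by
  choose B _ hB using fun i => hU.1 (runFrom U y i)
  refine ⟨(Finset.range (j + 1)).biUnion B, fun x hx i hi => ?_⟩
  induction i using Nat.strong_induction_on with
  | _ i ih =>
    refine hB i _ fun p hp => runFrom_apply_congr ?_ fun i' hi' => ih i' hi' (by omega)
    exact hx p (Finset.mem_biUnion.2 ⟨i, Finset.mem_range.2 (by omega), hp⟩)

theorem update_runFrom_ne_of_lt (hU : IsUpdateProc α U) {N s₁ s₂ m₁ m₂ : ℕ}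
    (hN : ∀ t ≥ N, ∀ u ∈ U (runFrom U x t), γ ≤ u.1) (hs₁ : N ≤ s₁) (hlt : s₁ < s₂)
    (h₁ : U (runFrom U x s₁) = some (γ, n, m₁)) : U (runFrom U x s₂) ≠ some (γ, n, m₂) := by
  induction s₂ using Nat.strong_induction_on generalizing m₂ with
  | _ s₂ ih =>
  intro h₂
  have hval : runFrom U x s₂ γ n = m₁ := by
    rw [runFrom_apply_eq_of_le hlt, runFrom_succ, h₁, oplus_apply_self]
    rintro t ht₁ ht₂ ⟨β, n', m⟩ hu
    refine ⟨hN t (by omega) _ hu, fun he => ?_⟩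
    obtain ⟨rfl, rfl⟩ := Prod.ext_iff.1 he
    exact ih t ht₂ (by omega) hu
  have hbelow : ∀ γ' < γ, runFrom U x s₁ γ' = runFrom U x s₂ γ' := fun γ' hγ' =>
    funext fun n' => (runFrom_apply_eq_of_lt hlt.le fun t ht₁ _ u hu =>
      hγ'.trans_le (hN t (by omega) u hu)).symm
  exact hU.2.2 _ _ γ n m₁ n m₂ hbelow h₁ hval h₂ rfl

theorem exists_eventually_runFrom_apply_eq (hU : IsUpdateProc α U)
    (hγ : ∀ᶠ t in atTop, ∀ u ∈ U (runFrom U x t), γ ≤ u.1) (n : ℕ) :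
    ∃ v, ∀ᶠ t in atTop, runFrom U x t γ n = v := by
  obtain ⟨N, hN⟩ := eventually_atTop.1 hγ
  by_cases hw : ∃ s ≥ N, ∃ m, U (runFrom U x s) = some (γ, n, m)
  · obtain ⟨s, hs, m, hu⟩ := hw
    refine ⟨m, eventually_atTop.2 ⟨s + 1, fun t ht => ?_⟩⟩
    rw [runFrom_apply_eq_of_le ht, runFrom_succ, hu, oplus_apply_self]
    rintro t' ht'₁ _ ⟨β, n', m'⟩ hu'
    refine ⟨hN t' (by omega) _ hu', fun he => ?_⟩
    obtain ⟨rfl, rfl⟩ := Prod.ext_iff.1 he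
    exact update_runFrom_ne_of_lt hU hN hs (by omega) hu hu'
  · push Not at hw
    refine ⟨runFrom U x N γ n, eventually_atTop.2 ⟨N, fun t ht => ?_⟩⟩
    refine runFrom_apply_eq_of_le ht fun t' ht'₁ _ ⟨β, n', m⟩ hu =>
      ⟨hN t' ht'₁ _ hu, fun he => ?_⟩
    obtain ⟨rfl, rfl⟩ := Prod.ext_iff.1 he
    exact hw t' ht'₁ m hu

end Run

def DivergesAbove (U : OSeq → Option (Ordinal × ℕ × ℕ)) (θ : Ordinal) (x : OSeq) : Prop :=
  (∀ γ n, θ ≤ γ → x γ n = 0) ∧ ∀ t, ∃ u ∈ U (runFrom U x t), θ ≤ u.1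

theorem DivergesAbove.update_ne_none {θ : Ordinal} {x : OSeq} (hx : DivergesAbove U θ x)
    (t : ℕ) : U (runFrom U x t) ≠ none := by
  obtain ⟨u, hu, -⟩ := hx.2 t
  exact Option.ne_none_iff_exists'.2 ⟨u, hu⟩

theorem DivergesAbove.le (hU : IsUpdateProc α U) {θ : Ordinal} {x : OSeq}
    (hx : DivergesAbove U θ x) : θ ≤ α := by
  obtain ⟨⟨β, n, m⟩, hu, hθ⟩ := hx.2 0
  exact hθ.trans (hU.2.1 _ β n m hu).le

section JumpLevel

variable {x : OSeq}

noncomputable def jumpLevel (U : OSeq → Option (Ordinal × ℕ × ℕ)) (x : OSeq) : Ordinal :=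
  sInf {d | ∃ᶠ t in atTop, ∃ u ∈ U (runFrom U x t), u.1 < d}

theorem frequently_lt_jumpLevel (hU : IsUpdateProc α U) (hx : ∀ t, U (runFrom U x t) ≠ none) :
    ∃ᶠ t in atTop, ∃ u ∈ U (runFrom U x t), u.1 < jumpLevel U x := by
  have hne : {d | ∃ᶠ t in atTop, ∃ u ∈ U (runFrom U x t), u.1 < d}.Nonempty := by
    refine ⟨α, Frequently.of_forall fun t => ?_⟩
    obtain ⟨⟨β, n, m⟩, hu⟩ := Option.ne_none_iff_exists'.1 (hx t)
    exact ⟨_, hu, hU.2.1 _ β n m hu⟩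
  exact csInf_mem hne

theorem eventually_le_of_lt_jumpLevel {d : Ordinal} (hd : d < jumpLevel U x) :
    ∀ᶠ t in atTop, ∀ u ∈ U (runFrom U x t), d ≤ u.1 := by
  have := notMem_of_lt_csInf hd (OrderBot.bddBelow _)
  simp only [Set.mem_ofPred_eq, not_frequently, not_exists, not_and, not_lt] at this
  exact this

theorem lt_jumpLevel (hU : IsUpdateProc α U) {θ : Ordinal} (hx : DivergesAbove U θ x) :
    θ < jumpLevel U x := by
  obtain ⟨t, u, hu, hlt⟩ := (frequently_lt_jumpLevel hU hx.update_ne_none).exists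
  obtain ⟨u', hu', hθ⟩ := hx.2 t
  cases Option.mem_unique hu hu'
  exact hθ.trans_lt hlt

variable {g : OSeq}
  (hg : ∀ γ < jumpLevel U x, ∀ n, ∀ᶠ t in atTop, runFrom U x t γ n = g γ n)
  (hg₀ : ∀ γ n, jumpLevel U x ≤ γ → g γ n = 0)
include hg hg₀

/-- Late enough, the state right after an update below `jumpLevel U x` agrees with `g` on any
given finite set of coordinates. -/
theorem frequently_update_runFrom_eq (hU : IsUpdateProc α U)
    (hx : ∀ t, U (runFrom U x t) ≠ none) (j : ℕ) :
    ∃ᶠ t in atTop, U (runFrom U x (t + 1 + j)) = U (runFrom U g j) := by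
  obtain ⟨A, hA⟩ := exists_finset_update_runFrom_eq hU g j
  have hnear : ∀ᶠ t in atTop, ∀ p ∈ A, p.1 < jumpLevel U x →
      runFrom U x (t + 1) p.1 p.2 = g p.1 p.2 :=
    (eventually_all_finset A).2 fun p _ => by
      by_cases hp : p.1 < jumpLevel U x
      · exact ((tendsto_add_atTop_nat 1).eventually (hg p.1 hp p.2)).mono fun _ h _ => h
      · exact Eventually.of_forall fun _ h => absurd h hp
  refine ((frequently_lt_jumpLevel hU hx).and_eventually hnear).mono ?_
  rintro t ⟨⟨⟨β, n, m⟩, hu, hβ⟩, hnear⟩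
  rw [runFrom_add]
  refine hA _ (fun p hp => ?_) j le_rfl
  by_cases hp' : p.1 < jumpLevel U x
  · exact hnear p hp hp'
  · rw [hg₀ p.1 p.2 (not_lt.1 hp'), runFrom_succ, hu]
    exact oplus_apply_of_lt (hβ.trans_le (not_lt.1 hp'))

/-- An update below `jumpLevel U x` of the process started at `g` would be performed infinitely
often by the process started at `x`, writing some place twice. -/
theorem divergesAbove_jumpLevel (hU : IsUpdateProc α U) (hx : ∀ t, U (runFrom U x t) ≠ none) :
    DivergesAbove U (jumpLevel U x) g := by
  refine ⟨hg₀, fun j => ?_⟩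
  have hfreq := frequently_update_runFrom_eq hg hg₀ hU hx j
  obtain ⟨t₀, ht₀⟩ := hfreq.exists
  obtain ⟨⟨β, n, m⟩, hu⟩ := Option.ne_none_iff_exists'.1 (ht₀ ▸ hx _)
  refine ⟨_, hu, not_lt.1 fun hβ => ?_⟩
  obtain ⟨N, hN⟩ := eventually_atTop.1 (eventually_le_of_lt_jumpLevel hβ)
  obtain ⟨t₁, ht₁, e₁⟩ := frequently_atTop.1 hfreq N
  obtain ⟨t₂, ht₂, e₂⟩ := frequently_atTop.1 hfreq (t₁ + 1)
  exact update_runFrom_ne_of_lt hU hN (by omega) (by omega : t₁ + 1 + j < t₂ + 1 + j)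
    (e₁.trans hu) (e₂.trans hu)

end JumpLevel

def Extends (p q : Ordinal × OSeq) : Prop :=
  p.1 ≤ q.1 ∧ ∀ γ < p.1, q.2 γ = p.2 γ

theorem Extends.refl (p : Ordinal × OSeq) : Extends p p :=
  ⟨le_rfl, fun _ _ => rfl⟩

theorem Extends.trans {p q r : Ordinal × OSeq} (hpq : Extends p q) (hqr : Extends q r) :
    Extends p r :=
  ⟨hpq.1.trans hqr.1, fun γ hγ => (hqr.2 γ (hγ.trans_le hpq.1)).trans (hpq.2 γ hγ)⟩

theorem exists_extends_divergesAbove (hU : IsUpdateProc α U) {θ : Ordinal} {x : OSeq}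
    (hx : DivergesAbove U θ x) :
    ∃ q : Ordinal × OSeq, Extends (θ, x) q ∧ θ < q.1 ∧ DivergesAbove U q.1 q.2 := by
  choose v hv using fun γ (hγ : γ < jumpLevel U x) =>
    exists_eventually_runFrom_apply_eq hU (eventually_le_of_lt_jumpLevel hγ)
  set g : OSeq := fun γ n => if hγ : γ < jumpLevel U x then v γ hγ n else 0
  have hg : ∀ γ (hγ : γ < jumpLevel U x) n, ∀ᶠ t in atTop, runFrom U x t γ n = g γ n :=
    fun γ hγ n => by simpa only [g, dif_pos hγ] using hv γ hγ n
  have hg₀ : ∀ γ n, jumpLevel U x ≤ γ → g γ n = 0 :=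
    fun γ n hγ => by simp only [g, dif_neg (not_lt.2 hγ)]
  have hθ := lt_jumpLevel hU hx
  refine ⟨(jumpLevel U x, g), ⟨hθ.le, fun γ hγ => funext fun n => ?_⟩, hθ,
    divergesAbove_jumpLevel hg hg₀ hU hx.update_ne_none⟩
  obtain ⟨t, ht⟩ := (hg γ (hγ.trans hθ) n).exists
  show g γ n = x γ n
  rw [← ht, runFrom_apply_eq_of_lt t.zero_le fun t' _ _ u hu => ?_]
  · rfl
  obtain ⟨u', hu', hθu⟩ := hx.2 t'
  cases Option.mem_unique hu hu'
  exact hγ.trans_le hθu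

section Chain

variable {c : Set (Ordinal × OSeq)}

theorem exists_extends_extends_of_isChain (hc : IsChain Extends c) {p r : Ordinal × OSeq}
    (hp : p ∈ c) (hr : r ∈ c) : ∃ q ∈ c, Extends p q ∧ Extends r q := by
  by_cases hpr : p = r
  · exact ⟨p, hp, .refl p, hpr ▸ .refl p⟩
  rcases hc hp hr hpr with h | h
  · exact ⟨r, hr, h, .refl r⟩
  · exact ⟨p, hp, .refl p, h⟩

open Classical in
noncomputable def glue (c : Set (Ordinal × OSeq)) : OSeq := fun γ n =>
  if h : ∃ p ∈ c, γ < p.1 then h.choose.2 γ n else 0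

theorem glue_apply_of_lt (hc : IsChain Extends c) {p : Ordinal × OSeq} (hp : p ∈ c)
    {γ : Ordinal} (hγ : γ < p.1) : glue c γ = p.2 γ := by
  have h : ∃ p ∈ c, γ < p.1 := ⟨p, hp, hγ⟩
  obtain ⟨q, -, hpq, hrq⟩ := exists_extends_extends_of_isChain hc hp h.choose_spec.1
  funext n
  rw [glue, dif_pos h, ← hrq.2 γ h.choose_spec.2, hpq.2 γ hγ]

theorem glue_apply_of_forall_le {γ : Ordinal} (h : ∀ p ∈ c, p.1 ≤ γ) (n : ℕ) :
    glue c γ n = 0 := by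
  rw [glue, dif_neg fun ⟨p, hp, hlt⟩ => (h p hp).not_gt hlt]

theorem exists_divergesAbove_upper_bound (hU : IsUpdateProc α U) (hc : IsChain Extends c)
    (hne : c.Nonempty) (hdiv : ∀ p ∈ c, DivergesAbove U p.1 p.2) :
    ∃ q : Ordinal × OSeq, DivergesAbove U q.1 q.2 ∧ ∀ p ∈ c, Extends p q := by
  set Λ := sSup (Prod.fst '' c)
  have hle : ∀ p ∈ c, p.1 ≤ Λ := fun p hp =>
    le_csSup ⟨α, by rintro _ ⟨p, hp, rfl⟩; exact (hdiv p hp).le hU⟩ ⟨p, hp, rfl⟩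
  have hglue₀ : ∀ γ n, Λ ≤ γ → glue c γ n = 0 := fun γ n hγ =>
    glue_apply_of_forall_le (fun p hp => (hle p hp).trans hγ) n
  refine ⟨(Λ, glue c), ⟨hglue₀, fun j => ?_⟩,
    fun p hp => ⟨hle p hp, fun γ hγ => glue_apply_of_lt hc hp hγ⟩⟩
  obtain ⟨A, hA⟩ := exists_finset_update_runFrom_eq hU (glue c) j
  obtain ⟨_, ⟨p, hp, rfl⟩, hpA⟩ :=
    exists_mem_forall_lt_of_lt_csSup (hne.image Prod.fst) A Prod.fst
  have hUq : ∀ q ∈ c, Extends p q → U (runFrom U q.2 j) = U (runFrom U (glue c) j) := by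
    refine fun q hq hpq => hA q.2 (fun a ha => ?_) j le_rfl
    by_cases haΛ : a.1 < Λ
    · exact (congrFun (glue_apply_of_lt hc hq ((hpA a ha haΛ).trans_le hpq.1)) a.2).symm
    · rw [hglue₀ _ _ (not_lt.1 haΛ), (hdiv q hq).1 _ _ ((hle q hq).trans (not_lt.1 haΛ))]
  obtain ⟨u, hu, -⟩ := (hdiv p hp).2 j
  rw [hUq p hp (.refl p)] at hu
  refine ⟨u, hu, csSup_le (hne.image _) ?_⟩
  rintro _ ⟨r, hr, rfl⟩
  obtain ⟨q, hq, hpq, hrq⟩ := exists_extends_extends_of_isChain hc hp hr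
  obtain ⟨u', hu', hqu'⟩ := (hdiv q hq).2 j
  rw [hUq q hq hpq] at hu'
  cases Option.mem_unique hu hu'
  exact hrq.1.trans hqu'

end Chain

theorem exists_update_learnProc_eq_none (hU : IsUpdateProc α U) :
    ∃ k, U (learnProc U k) = none := by
  by_contra! h
  have h₀ : DivergesAbove U 0 (fun _ _ => 0) := by
    refine ⟨fun _ _ _ => rfl, fun t => ?_⟩
    obtain ⟨u, hu⟩ := Option.ne_none_iff_exists'.1 (learnProc_eq_runFrom U ▸ h t)
    exact ⟨u, hu, zero_le⟩
  let D := {p : Ordinal × OSeq // DivergesAbove U p.1 p.2}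
  have : Nonempty D := ⟨⟨(0, fun _ _ => 0), h₀⟩⟩
  have hchain : ∀ c : Set D, IsChain (fun p q : D => Extends p.1 q.1) c → c.Nonempty →
      ∃ q : D, ∀ p ∈ c, Extends p.1 q.1 := by
    intro c hc hne
    have hc' : IsChain Extends (Subtype.val '' c) := by
      rintro _ ⟨p, hp, rfl⟩ _ ⟨r, hr, rfl⟩ hpr
      exact hc hp hr fun h => hpr (congrArg Subtype.val h)
    obtain ⟨q, hq, hub⟩ := exists_divergesAbove_upper_bound hU hc' (hne.image _)
      (by rintro _ ⟨p, -, rfl⟩; exact p.2)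
    exact ⟨⟨q, hq⟩, fun p hp => hub p ⟨p, hp, rfl⟩⟩
  obtain ⟨m, hm⟩ := exists_maximal_of_nonempty_chains_bounded hchain fun hpq hqr => hpq.trans hqr
  obtain ⟨q, hmq, hlt, hq⟩ := exists_extends_divergesAbove hU m.2
  exact (hm ⟨q, hq⟩ hmq).1.not_gt hlt

end LearningProcess

theorem termination_of_learning_processes_general (α : Ordinal)
    (U : OSeq → Option (Ordinal × ℕ × ℕ)) (hU : IsUpdateProc α U) :
    ∃ k : ℕ, U (learnProc U k) = none ∧ OFinite α (learnProc U k) := by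
  obtain ⟨k, hk⟩ := LearningProcess.exists_update_learnProc_eq_none hU
  exact ⟨k, hk, LearningProcess.oFinite_learnProc U α k⟩

/-- Termination of Learning Processes: for any update procedure `U` of countable
ordinal `α ≥ 1`, the learning process generated by `U` terminates, i.e. there
is `k` with `U(U^(k)) = ∅`; in particular `U^(k)` is a finite zero of `U`. -/
theorem termination_of_learning_processes (α : Ordinal)
    (hα : 1 ≤ α) (hcount : α.card ≤ Cardinal.aleph0)
    (U : OSeq → Option (Ordinal × ℕ × ℕ)) (hU : IsUpdateProc α U) :
    ∃ k : ℕ, U (learnProc U k) = none ∧ OFinite α (learnProc U k) :=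
  termination_of_learning_processes_general α U hU
end

section
/- Every update procedure of ordinal ω has a finite zero: if U is a map sending each sequence f : ℕ → (ℕ → ℕ) of functions to an element of (ℕ × ℕ × ℕ) ∪ {∅}, U is continuous, and U satisfies the update condition with index set ℕ in its usual order, then there exists f with {(i,n) : f_i n ≠ 0} finite and U f = ∅ (Zero Theorem for update procedures of ordinal ω). -/
/-!
Classically a zero is easy to find. Call `v` proposed for position `n` of level `i` over `x` if
some sequence agreeing with `x` below level `i` is sent by `U` to `(i, n, v)`. Build `x` level
by level, by well-founded recursion, so that at every position where some value is proposed,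
`x` takes one of the proposed values. If `U x = (i, n, v)`, then `v` is proposed for `n` over `x`
itself, so `x i n` is a proposed value `U r = (i, n, x i n)`, and the update condition applied
to `r` and `x` forbids `U x` from updating position `n` again. Hence `U x = ∅`, and by
continuity `x` may be cut down to the finitely many positions that `U` reads at `x`.
-/

theorem exists_isFixedPt_of_congr_lt {ι γ : Type*} [LT ι] [WellFoundedLT ι] [Nonempty γ]
    (Φ : (ι → γ) → ι → γ) (hΦ : ∀ x y i, (∀ j < i, x j = y j) → Φ x i = Φ y i) :
    ∃ x, Function.IsFixedPt Φ x := by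
  classical
  let extend (i : ι) (rec : ∀ j, j < i → γ) (j : ι) : γ :=
    if h : j < i then rec j h else Classical.arbitrary γ
  let x := wellFounded_lt.fix fun i rec => Φ (extend i rec) i
  refine ⟨x, funext fun i => ?_⟩
  calc Φ x i = Φ (extend i fun j _ => x j) i := hΦ _ _ i fun j hj => by simp [extend, hj]
    _ = x i := (wellFounded_lt.fix_eq (fun i rec => Φ (extend i rec) i) i).symm

namespace UpdateProcedure

variable {ι β α : Type*} [LT ι]

/-- `U f = some (i, n, m)` asks to update `f` by setting `f i n := m`; `none` plays `∅`. -/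
def UpdateCondition (U : (ι → β → α) → Option (ι × β × α)) : Prop :=
  ∀ (f g : ι → β → α) (i : ι) (n : β) (m : α) (h : β) (l : α),
    (∀ j, j < i → f j = g j) → U f = some (i, n, m) → g i n = m → U g = some (i, h, l) → h ≠ n

variable {U : (ι → β → α) → Option (ι × β × α)}

def Proposes (U : (ι → β → α) → Option (ι × β × α)) (x : ι → β → α) (i : ι) (n : β)
    (v : α) : Prop :=
  ∃ r : ι → β → α, (∀ j < i, r j = x j) ∧ U r = some (i, n, v)

theorem proposes_congr {x y : ι → β → α} {i : ι} (hxy : ∀ j < i, x j = y j) {n : β} {v : α} :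
    Proposes U x i n v ↔ Proposes U y i n v := by
  refine exists_congr fun r => and_congr_left fun _ => forall₂_congr fun j hj => ?_
  rw [hxy j hj]

theorem eq_none_of_forall_proposes (hU : UpdateCondition U) {x : ι → β → α}
    (hx : ∀ i n v, Proposes U x i n v → Proposes U x i n (x i n)) : U x = none := by
  rcases hUx : U x with _ | ⟨i, n, v⟩
  · rfl
  obtain ⟨r, hr, hUr⟩ := hx i n v ⟨x, fun _ _ => rfl, hUx⟩
  exact absurd rfl (hU r x i n (x i n) n v hr hUr rfl hUx)

theorem exists_forall_proposes [WellFoundedLT ι] [Nonempty α] :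
    ∃ x : ι → β → α, ∀ i n v, Proposes U x i n v → Proposes U x i n (x i n) := by
  let choice (x : ι → β → α) (i : ι) (n : β) : α := Classical.epsilon (Proposes U x i n)
  obtain ⟨x, hx⟩ := exists_isFixedPt_of_congr_lt choice fun x y i hxy =>
    funext fun n => congrArg Classical.epsilon (funext fun v => propext (proposes_congr hxy))
  refine ⟨x, fun i n v hv => ?_⟩
  rw [← congrFun (congrFun hx i) n]
  exact Classical.epsilon_spec ⟨v, hv⟩

theorem exists_eq_none [WellFoundedLT ι] [Nonempty α] (hU : UpdateCondition U) :
    ∃ x, U x = none :=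
  let ⟨x, hx⟩ := exists_forall_proposes (U := U)
  ⟨x, eq_none_of_forall_proposes hU hx⟩

end UpdateProcedure

theorem exists_finite_support_eq {ι β α δ : Type*} [Zero α] {F : (ι → β → α) → δ}
    {x : ι → β → α} (hx : ∃ A : Finset (ι × β),
      ∀ g : ι → β → α, (∀ p ∈ A, g p.1 p.2 = x p.1 p.2) → F g = F x) :
    ∃ g : ι → β → α, Set.Finite {p : ι × β | g p.1 p.2 ≠ 0} ∧ F g = F x := by
  classical
  obtain ⟨A, hA⟩ := hx
  refine ⟨fun i n => if (i, n) ∈ A then x i n else 0, A.finite_toSet.subset fun p hp => ?_,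
    hA _ fun p hp => if_pos hp⟩
  by_contra hpA
  exact hp (if_neg hpA)

/-- Zero Theorem for update procedures of ordinal ω: every continuous map
`U` on ℕ-indexed sequences of functions satisfying the update condition
(with index set ℕ in its usual order) has a finite zero. -/
theorem zero_theorem_omega_update_procedure
    (U : (ℕ → ℕ → ℕ) → Option (ℕ × ℕ × ℕ))
    -- continuity
    (hcont : ∀ f : ℕ → ℕ → ℕ, ∃ A : Finset (ℕ × ℕ),
      ∀ g : ℕ → ℕ → ℕ, (∀ p ∈ A, g p.1 p.2 = f p.1 p.2) → U g = U f)
    -- update condition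
    (hupd : ∀ (f g : ℕ → ℕ → ℕ) (i n m h l : ℕ),
      (∀ j, j < i → f j = g j) →
      U f = some (i, n, m) → g i n = m → U g = some (i, h, l) → h ≠ n) :
    ∃ f : ℕ → ℕ → ℕ, Set.Finite {p : ℕ × ℕ | f p.1 p.2 ≠ 0} ∧ U f = none := by
  obtain ⟨x, hx⟩ := UpdateProcedure.exists_eq_none hupd
  obtain ⟨f, hfin, hf⟩ := exists_finite_support_eq (hcont x)
  exact ⟨f, hfin, hf.trans hx⟩
end

section
/- Let A be a type and f₁, f₂ : ℕ → A. Let M be a modulus of convergence for f₁ and N a modulus of convergence for f₂. Define (M ⊔ N) h z := N h (M (h ∘ (N h)) z). Then M ⊔ N is a modulus of convergence for both f₁ and f₂ (Joint Convergence). -/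
/-- `f↓[n,m]`: the function `f` is constant on the interval `[n,m]`. -/
def ConvOn {A : Type*} (f : ℕ → A) (n m : ℕ) : Prop :=
  ∀ x, n ≤ x → x ≤ m → f x = f n

/-- `h ≥ id`. -/
def GeId (h : ℕ → ℕ) : Prop := ∀ x, x ≤ h x

/-- `M` is a modulus of convergence for `f`. -/
def IsModulus {A : Type*} (M : (ℕ → ℕ) → ℕ → ℕ) (f : ℕ → A) : Prop :=
  (∀ h, GeId h → GeId (M h)) ∧
  (∀ h, GeId h → ∀ z, ConvOn f (M h z) (h (M h z)))

/-- The join of two moduli: `(M ⊔ N) h z = N h (M (h ∘ N h) z)`. -/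
def joinMod (M N : (ℕ → ℕ) → ℕ → ℕ) : (ℕ → ℕ) → ℕ → ℕ :=
  fun h z => N h (M (h ∘ N h) z)

theorem GeId.comp {g h : ℕ → ℕ} (hg : GeId g) (hh : GeId h) : GeId (g ∘ h) :=
  fun x => (hh x).trans (hg _)

theorem ConvOn.mono {A : Type*} {f : ℕ → A} {n m n' m' : ℕ} (hf : ConvOn f n m)
    (hn : n ≤ n') (hm : m' ≤ m) : ConvOn f n' m' :=
  fun x hx hx' =>
    (hf x (hn.trans hx) (hx'.trans hm)).trans (hf n' hn ((hx.trans hx').trans hm)).symm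

theorem geId_joinMod {M N : (ℕ → ℕ) → ℕ → ℕ} (hM : ∀ h, GeId h → GeId (M h))
    (hN : ∀ h, GeId h → GeId (N h)) {h : ℕ → ℕ} (hh : GeId h) : GeId (joinMod M N h) :=
  fun z => (hM _ (hh.comp (hN h hh)) z).trans (hN h hh _)

namespace IsModulus

variable {A : Type*} {f : ℕ → A} {M N : (ℕ → ℕ) → ℕ → ℕ}

/- With `a = M (h ∘ N h) z`, the window `[a, h (N h a)]` that `M` provides for the stretched
function `h ∘ N h` contains the window `[N h a, h (N h a)]` of `M ⊔ N`. -/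
theorem joinMod_left (hM : IsModulus M f) (hN : ∀ h, GeId h → GeId (N h)) :
    IsModulus (joinMod M N) f :=
  ⟨fun _ hh => geId_joinMod hM.1 hN hh,
    fun h hh z => (hM.2 (h ∘ N h) (hh.comp (hN h hh)) z).mono (hN h hh _) le_rfl⟩

theorem joinMod_right (hM : ∀ h, GeId h → GeId (M h)) (hN : IsModulus N f) :
    IsModulus (joinMod M N) f :=
  ⟨fun _ hh => geId_joinMod hM hN.1 hh, fun h hh z => hN.2 h hh (M (h ∘ N h) z)⟩

end IsModulus

/-- Joint Convergence: if `M` is a modulus of convergence for `f₁` and `N` one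
for `f₂`, then `M ⊔ N` is a modulus of convergence for both `f₁` and `f₂`. -/
theorem joint_convergence {A : Type*} (f₁ f₂ : ℕ → A)
    (M N : (ℕ → ℕ) → ℕ → ℕ)
    (hM : IsModulus M f₁) (hN : IsModulus N f₂) :
    IsModulus (joinMod M N) f₁ ∧ IsModulus (joinMod M N) f₂ :=
  ⟨hM.joinMod_left hN.1, hN.joinMod_right hM.1⟩
end

section
/- Let U be an update procedure of countable ordinal α, let β < α be a limit ordinal, and let g be a sequence of ordinal β. If a sequence f of ordinal α − β is U_g-generated, then there exists γ < β such that 0^{β−γ} * f is U_{g_{<γ}}-generated (Reduction Lemma, limit case, part 1). -/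
/-- `f` is `U`-generated. -/
def IsGenerated (U : OSeq → Option (Ordinal × ℕ × ℕ)) (f : OSeq) : Prop :=
  ∃ i : ℕ, f = learnProc U i

/-- Concatenation `g * f` of a sequence `g` of ordinal `β` with a sequence `f`:
entries below `β` come from `g`, higher entries from `f` (shifted by `β`). -/
noncomputable def concatSeq (β : Ordinal) (g f : OSeq) : OSeq :=
  fun δ => if δ < β then g δ else f (δ - β)

/-- The shifted procedure `U_g` (for `g` a sequence of ordinal `β`):
`U_g f = (γ,n,m)` if `U (g * f) = (β + γ, n, m)`, and `U_g f = ∅` otherwise. -/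
noncomputable def shiftU (U : OSeq → Option (Ordinal × ℕ × ℕ)) (β : Ordinal)
    (g : OSeq) : OSeq → Option (Ordinal × ℕ × ℕ) :=
  fun f =>
    match U (concatSeq β g f) with
    | none => none
    | some (δ, n, m) => if β ≤ δ then some (δ - β, n, m) else none

/-- The constantly zero sequence. -/
def zeroSeq : OSeq := fun _ _ => 0

/-!
Only finitely many entries are read while running `U_g` for `i` steps: the finitely many
places queried by continuity and the finitely many indices that are updated. Since `β` is a
limit, some `γ < β` lies above all of them that lie below `β`. Replacing `g` on `[γ, β)` by
zeros then changes none of these answers, so `U_{g_{<γ}}` runs the same learning process,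
padded with `β - γ` zero functions in front.
-/

theorem Order.IsSuccLimit.exists_lt_forall_lt {α : Type*} [LinearOrder α] {β : α}
    (hβ : Order.IsSuccLimit β) (s : Finset α) : ∃ γ < β, ∀ x ∈ s, x < β → x < γ := by
  induction s using Finset.induction_on with
  | empty =>
    obtain ⟨γ, hγ⟩ := not_isMin_iff.1 hβ.not_isMin
    exact ⟨γ, hγ, by simp⟩
  | insert a s _ ih =>
    obtain ⟨γ, hγβ, hγ⟩ := ih
    by_cases ha : a < β
    · obtain ⟨c, hcβ, hc⟩ := hβ.lt_iff_exists_lt.1 (max_lt hγβ ha)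
      refine ⟨c, hcβ, (Finset.forall_mem_insert _ _ _).2
        ⟨fun _ => (le_max_right _ _).trans_lt hc, ?_⟩⟩
      exact fun x hx hxβ => (hγ x hx hxβ).trans ((le_max_left _ _).trans_lt hc)
    · exact ⟨γ, hγβ, (Finset.forall_mem_insert _ _ _).2 ⟨fun h => absurd h ha, hγ⟩⟩

theorem Ordinal.sub_eq_sub_add_sub {γ β δ : Ordinal} (hγβ : γ ≤ β) (hβδ : β ≤ δ) :
    δ - γ = (β - γ) + (δ - β) :=
  Ordinal.sub_eq_of_add_eq <| by
    rw [← add_assoc, Ordinal.add_sub_cancel_of_le hγβ, Ordinal.add_sub_cancel_of_le hβδ]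

/-- Undoes the index shift of `shiftU`: an update of `f` at `δ` is an update of `h * f` at `c + δ`
when `h` has ordinal `c`. -/
def shiftUpdate (c : Ordinal) : Option (Ordinal × ℕ × ℕ) → Option (Ordinal × ℕ × ℕ) :=
  Option.map fun u => (c + u.1, u.2)

def DependsFinitely (U : OSeq → Option (Ordinal × ℕ × ℕ)) : Prop :=
  ∀ f : OSeq, ∃ A : Finset (Ordinal × ℕ),
    ∀ f' : OSeq, (∀ p ∈ A, f' p.1 p.2 = f p.1 p.2) → U f' = U f

theorem IsUpdateProc.dependsFinitely {α : Ordinal} {U : OSeq → Option (Ordinal × ℕ × ℕ)}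
    (hU : IsUpdateProc α U) : DependsFinitely U :=
  fun f => (hU.1 f).imp fun _ hA => hA.2

theorem concatSeq_add (c : Ordinal) (h f : OSeq) (δ : Ordinal) :
    concatSeq c h f (c + δ) = f δ := by
  simp [concatSeq, Ordinal.add_sub_cancel]

theorem concatSeq_oplus (c : Ordinal) (h f : OSeq) (u : Option (Ordinal × ℕ × ℕ)) :
    concatSeq c h (oplus f u) = oplus (concatSeq c h f) (shiftUpdate c u) := by
  rcases u with _ | ⟨δ, n, m⟩
  · rfl
  funext ε x
  rcases lt_or_ge ε c with hε | hε
  · have hεδ : ε < c + δ := hε.trans_le le_self_add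
    simp [shiftUpdate, oplus, concatSeq, hε, hεδ]
  · obtain ⟨ε, rfl⟩ := exists_add_of_le hε
    simp only [shiftUpdate, Option.map_some, oplus, concatSeq_add, add_lt_add_iff_left,
      add_right_inj]

theorem concatSeq_zeroSeq_zero (c : Ordinal) :
    concatSeq c zeroSeq (fun _ _ => 0) = fun _ _ => 0 := by
  funext ε x
  by_cases hε : ε < c <;> simp [concatSeq, zeroSeq, hε]

theorem learnProc_eq_concatSeq_zeroSeq {V W : OSeq → Option (Ordinal × ℕ × ℕ)} (c : Ordinal)
    (k : ℕ) (hVW : ∀ j < k, V (concatSeq c zeroSeq (learnProc W j)) =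
      shiftUpdate c (W (learnProc W j))) :
    learnProc V k = concatSeq c zeroSeq (learnProc W k) := by
  induction k with
  | zero => exact (concatSeq_zeroSeq_zero c).symm
  | succ k ih =>
    rw [learnProc, learnProc, ih fun j hj => hVW j (hj.trans k.lt_succ_self),
      hVW k k.lt_succ_self, concatSeq_oplus]

theorem concatSeq_concatSeq_zeroSeq_apply_of_lt_or_le {γ β ε : Ordinal} (hγβ : γ ≤ β)
    (g f : OSeq) (hε : ε < γ ∨ β ≤ ε) :
    concatSeq γ g (concatSeq (β - γ) zeroSeq f) ε = concatSeq β g f ε := by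
  rcases hε with hε | hε
  · simp [concatSeq, hε, hε.trans_le hγβ]
  · obtain ⟨d, rfl⟩ := exists_add_of_le hγβ
    obtain ⟨ε, rfl⟩ := exists_add_of_le hε
    rw [concatSeq_add (γ + d), Ordinal.add_sub_cancel, add_assoc, concatSeq_add, concatSeq_add]

/-- The finite set `B` collects the indices read by `U` on `g * f` and the index it updates. -/
theorem exists_finset_shiftU_concatSeq_zeroSeq {U : OSeq → Option (Ordinal × ℕ × ℕ)}
    (hU : DependsFinitely U) (β : Ordinal) (g f : OSeq) :
    ∃ B : Finset Ordinal, ∀ γ ≤ β, (∀ b ∈ B, b < β → b < γ) →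
      shiftU U γ g (concatSeq (β - γ) zeroSeq f) = shiftUpdate (β - γ) (shiftU U β g f) := by
  obtain ⟨A, hA⟩ := hU (concatSeq β g f)
  have hsame : ∀ γ ≤ β, (∀ p ∈ A, p.1 < β → p.1 < γ) →
      U (concatSeq γ g (concatSeq (β - γ) zeroSeq f)) = U (concatSeq β g f) :=
    fun γ hγβ hγ => hA _ fun p hp =>
      congrFun (concatSeq_concatSeq_zeroSeq_apply_of_lt_or_le hγβ g f
        ((lt_or_ge p.1 β).imp (hγ p hp) id)) p.2
  rcases hUf : U (concatSeq β g f) with _ | ⟨δ, n, m⟩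
  · refine ⟨A.image Prod.fst, fun γ hγβ hγ => ?_⟩
    have hsame := hsame γ hγβ fun p hp => hγ p.1 (Finset.mem_image_of_mem _ hp)
    simp [shiftU, shiftUpdate, hsame, hUf]
  · refine ⟨insert δ (A.image Prod.fst), fun γ hγβ hγ => ?_⟩
    have hsame := hsame γ hγβ fun p hp =>
      hγ p.1 (Finset.mem_insert_of_mem (Finset.mem_image_of_mem _ hp))
    rcases lt_or_ge δ β with hδβ | hβδ
    · have hδγ := hγ δ (Finset.mem_insert_self _ _) hδβ
      simp [shiftU, shiftUpdate, hsame, hUf, not_le.2 hδβ, not_le.2 hδγ]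
    · simp [shiftU, shiftUpdate, hsame, hUf, hβδ, hγβ.trans hβδ,
        Ordinal.sub_eq_sub_add_sub hγβ hβδ]

theorem reduction_lemma_limit_part1_general (α : Ordinal)
    (U : OSeq → Option (Ordinal × ℕ × ℕ)) (hU : IsUpdateProc α U)
    (β : Ordinal) (hβ : Order.IsSuccLimit β)
    (g f : OSeq) (hf : IsGenerated (shiftU U β g) f) :
    ∃ γ, γ < β ∧ IsGenerated (shiftU U γ g) (concatSeq (β - γ) zeroSeq f) := by
  obtain ⟨i, rfl⟩ := hf
  choose B hB using exists_finset_shiftU_concatSeq_zeroSeq hU.dependsFinitely β g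
  obtain ⟨γ, hγβ, hγ⟩ :=
    hβ.exists_lt_forall_lt ((Finset.range i).biUnion fun k => B (learnProc (shiftU U β g) k))
  refine ⟨γ, hγβ, i, (learnProc_eq_concatSeq_zeroSeq _ i fun j hj => ?_).symm⟩
  exact hB _ γ hγβ.le fun b hb => hγ b (Finset.mem_biUnion.2 ⟨j, Finset.mem_range.2 hj, hb⟩)

/-- Reduction Lemma (limit case, part 1): let `U` be an update procedure of
countable ordinal `α`, `β < α` a limit ordinal, and `g` a sequence of ordinal
`β`. If a sequence `f` (of ordinal `α - β`) is `U_g`-generated, then there is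
`γ < β` such that `0^(β-γ) * f` is `U_{g_{<γ}}`-generated. -/
theorem reduction_lemma_limit_part1 (α : Ordinal)
    (hcount : α.card ≤ Cardinal.aleph0)
    (U : OSeq → Option (Ordinal × ℕ × ℕ)) (hU : IsUpdateProc α U)
    (β : Ordinal) (hβα : β < α) (hβ : Order.IsSuccLimit β)
    (g f : OSeq) (hf : IsGenerated (shiftU U β g) f) :
    ∃ γ, γ < β ∧ IsGenerated (shiftU U γ g) (concatSeq (β - γ) zeroSeq f) :=
  reduction_lemma_limit_part1_general α U hU β hβ g f hf
end

section
/- Let U be an update procedure of countable ordinal α ≥ 1 and define g : ℕ → ℕ by: g x = y if there exists i with U(U^(i)) = (0, x, y) and i is the least element of {n : ∃z, U(U^(n)) = (0, x, z)}, and g x = 0 if no such i exists. Then for every finite function g₀ ≤ g: if the sequence g₀ * 0^{α−1} is U-generated and a sequence f of ordinal α − 1 is U_{g₀}-generated, then g₀ * f is U-generated (Reduction Lemma, successor case, part 1). -/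
theorem concatSeq_oplus_some (β : Ordinal) (g f : OSeq) (δ : Ordinal) (n m : ℕ) :
    concatSeq β g (oplus f (some (δ, n, m))) =
      oplus (concatSeq β g f) (some (β + δ, n, m)) := by
  funext x k
  by_cases hx : x < β
  · simp [concatSeq, oplus, hx, hx.trans_le (le_self_add (a := β) (b := δ))]
  · obtain ⟨ε, rfl⟩ := exists_add_of_le (not_lt.1 hx)
    simp [concatSeq, oplus, hx, Ordinal.add_sub_cancel]

theorem concatSeq_oplus_shiftU (U : OSeq → Option (Ordinal × ℕ × ℕ)) (β : Ordinal)
    (g f : OSeq) :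
    concatSeq β g (oplus f (shiftU U β g f)) = concatSeq β g f ∨
      concatSeq β g (oplus f (shiftU U β g f)) =
        oplus (concatSeq β g f) (U (concatSeq β g f)) := by
  unfold shiftU
  rcases hU : U (concatSeq β g f) with _ | ⟨δ, n, m⟩
  · exact Or.inl rfl
  · by_cases hδ : β ≤ δ
    · right
      simp only [hδ, ↓reduceIte, concatSeq_oplus_some, Ordinal.add_sub_cancel_of_le hδ]
    · left
      simp only [hδ, ↓reduceIte, oplus]

theorem IsGenerated.concatSeq_of_shiftU {U : OSeq → Option (Ordinal × ℕ × ℕ)} {β : Ordinal}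
    {g f : OSeq} (hzero : IsGenerated U (concatSeq β g zeroSeq))
    (hf : IsGenerated (shiftU U β g) f) : IsGenerated U (concatSeq β g f) := by
  obtain ⟨k, rfl⟩ := hf
  induction k with
  | zero => exact hzero
  | succ k ih =>
    obtain ⟨j, hj⟩ := ih
    rcases concatSeq_oplus_shiftU U β g (learnProc (shiftU U β g) k) with h | h
    · exact ⟨j, h.trans hj⟩
    · exact ⟨j + 1, h.trans (by rw [hj, learnProc])⟩

theorem reduction_lemma_successor_part1_general
    (U : OSeq → Option (Ordinal × ℕ × ℕ))
    (g₀ : ℕ → ℕ)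
    (hgen : IsGenerated U (concatSeq 1 (fun _ => g₀) zeroSeq))
    (f : OSeq) (hf : IsGenerated (shiftU U 1 (fun _ => g₀)) f) :
    IsGenerated U (concatSeq 1 (fun _ => g₀) f) :=
  hgen.concatSeq_of_shiftU hf

/-- Reduction Lemma (successor case, part 1): let `U` be an update procedure of
countable ordinal `α ≥ 1` and let `g : ℕ → ℕ` be defined by `g x = y` if
`U (U^(i)) = (0, x, y)` for the least `i` such that `U (U^(i))` is an update at
`(0, x)`, and `g x = 0` if there is no such `i`. Then for every finite function
`g₀ ≤ g`: if `g₀ * 0^(α-1)` is `U`-generated and `f` (of ordinal `α - 1`) is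
`U_{g₀}`-generated, then `g₀ * f` is `U`-generated. -/
theorem reduction_lemma_successor_part1 (α : Ordinal) (hα : 1 ≤ α)
    (hcount : α.card ≤ Cardinal.aleph0)
    (U : OSeq → Option (Ordinal × ℕ × ℕ)) (hU : IsUpdateProc α U)
    (g : ℕ → ℕ)
    (hg : ∀ x : ℕ,
      (∃ i : ℕ, U (learnProc U i) = some (0, x, g x) ∧
        ∀ j < i, ∀ z : ℕ, U (learnProc U j) ≠ some (0, x, z))
      ∨ (g x = 0 ∧ ∀ i : ℕ, ∀ z : ℕ, U (learnProc U i) ≠ some (0, x, z)))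
    (g₀ : ℕ → ℕ) (hfin : Set.Finite {n : ℕ | g₀ n ≠ 0})
    (hle : ∀ n, g₀ n ≠ 0 → g₀ n = g n)
    (hgen : IsGenerated U (concatSeq 1 (fun _ => g₀) zeroSeq))
    (f : OSeq) (hf : IsGenerated (shiftU U 1 (fun _ => g₀)) f) :
    IsGenerated U (concatSeq 1 (fun _ => g₀) f) :=
  reduction_lemma_successor_part1_general U g₀ hgen f hf
end

section
/- Let U be an update procedure of countable ordinal α and let g be a sequence of ordinal β with β < α. Then: (1) U_g is an update procedure of ordinal α − β (it is continuous and satisfies the update condition); (2) for every function h : ℕ → ℕ (viewed as a length-one sequence), U_{g*h} = (U_g)_h as maps on sequences of ordinal α − (β + 1). -/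
/-! Everything rests on `shiftU_eq_some_iff`: `U_g f = (γ, n, m)` exactly when
`U (g * f) = (β + γ, n, m)`. Continuity and the update condition of `U_g` are then those of `U`
at `g * f`, since `g * f` and `g * f'` agree below `β + γ` when `f` and `f'` agree below `γ`, and
`U_{g*h} = (U_g)_h` is the associativity `(g * h) * f = g * (h * f)` of concatenation. -/

section concat

variable {β γ δ : Ordinal} {g h f f' : OSeq}

theorem concatSeq_of_lt (hδ : δ < β) : concatSeq β g f δ = g δ := if_pos hδ

theorem concatSeq_add_right : concatSeq β g f (β + γ) = f γ := by
  simp [concatSeq, Ordinal.add_sub_cancel]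

theorem concatSeq_congr_of_lt (hff' : ∀ ε < γ, f ε = f' ε) (hδ : δ < β + γ) :
    concatSeq β g f δ = concatSeq β g f' δ := by
  by_cases hδβ : δ < β
  · rw [concatSeq_of_lt hδβ, concatSeq_of_lt hδβ]
  · obtain ⟨ε, rfl⟩ := exists_add_of_le (not_lt.1 hδβ)
    rw [concatSeq_add_right, concatSeq_add_right, hff' ε ((add_lt_add_iff_left β).1 hδ)]

theorem concatSeq_concatSeq :
    concatSeq (β + γ) (concatSeq β g h) f = concatSeq β g (concatSeq γ h f) := by
  funext δ
  by_cases hδβ : δ < β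
  · rw [concatSeq_of_lt (hδβ.trans_le le_self_add), concatSeq_of_lt hδβ, concatSeq_of_lt hδβ]
  · obtain ⟨ε, rfl⟩ := exists_add_of_le (not_lt.1 hδβ)
    simp only [concatSeq, add_lt_add_iff_left, Ordinal.add_sub_add_cancel, hδβ,
      Ordinal.add_sub_cancel, if_false]

end concat

section shift

variable {U : OSeq → Option (Ordinal × ℕ × ℕ)} {β γ : Ordinal} {g f : OSeq} {n m : ℕ}

theorem shiftU_eq_some_iff :
    shiftU U β g f = some (γ, n, m) ↔ U (concatSeq β g f) = some (β + γ, n, m) := by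
  unfold shiftU
  rcases U (concatSeq β g f) with _ | ⟨δ, n', m'⟩
  · simp
  · by_cases hβδ : β ≤ δ
    · obtain ⟨ε, rfl⟩ := exists_add_of_le hβδ
      simp [hβδ, Ordinal.add_sub_cancel]
    · simp only [hβδ, if_false, reduceCtorEq, false_iff, Option.some.injEq, Prod.mk.injEq]
      rintro ⟨rfl, -⟩
      exact hβδ le_self_add

theorem shiftU_shiftU (h : OSeq) :
    shiftU (shiftU U β g) γ h = shiftU U (β + γ) (concatSeq β g h) := by
  funext f
  refine Option.ext fun ⟨δ, n, m⟩ => ?_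
  rw [shiftU_eq_some_iff, shiftU_eq_some_iff, shiftU_eq_some_iff, concatSeq_concatSeq, add_assoc]

end shift

namespace IsUpdateProc

variable {α : Ordinal} {U : OSeq → Option (Ordinal × ℕ × ℕ)}

theorem shiftU_continuous (hU : IsUpdateProc α U) (β : Ordinal) (g f : OSeq) :
    ∃ A : Finset (Ordinal × ℕ), (∀ p ∈ A, p.1 < α - β) ∧
      ∀ f' : OSeq, (∀ p ∈ A, f' p.1 p.2 = f p.1 p.2) → shiftU U β g f' = shiftU U β g f := by
  obtain ⟨A, hAα, hA⟩ := hU.1 (concatSeq β g f)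
  refine ⟨(A.filter (β ≤ ·.1)).image fun p => (p.1 - β, p.2), ?_, fun f' hf' => ?_⟩
  · simp only [Finset.mem_image, Finset.mem_filter]
    rintro _ ⟨p, ⟨hpA, hβp⟩, rfl⟩
    rw [Ordinal.lt_sub, Ordinal.add_sub_cancel_of_le hβp]
    exact hAα p hpA
  · have hU_eq : U (concatSeq β g f') = U (concatSeq β g f) := by
      refine hA _ fun ⟨δ, x⟩ hpA => ?_
      by_cases hδβ : δ < β
      · simp only [concatSeq_of_lt hδβ]
      · obtain ⟨ε, rfl⟩ := exists_add_of_le (not_lt.1 hδβ)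
        simp only [concatSeq_add_right]
        refine hf' (ε, x) (Finset.mem_image.2 ⟨(β + ε, x), ?_, ?_⟩)
        · exact Finset.mem_filter.2 ⟨hpA, le_self_add⟩
        · simp [Ordinal.add_sub_cancel]
    simp only [shiftU, hU_eq]

theorem shiftU (hU : IsUpdateProc α U) (β : Ordinal) (g : OSeq) :
    IsUpdateProc (α - β) (shiftU U β g) := by
  refine ⟨hU.shiftU_continuous β g, fun f γ n m hf => ?_, fun f f' γ n m i j hff' hf hf'γ hf' => ?_⟩
  · exact Ordinal.lt_sub.2 (hU.2.1 _ _ _ _ (shiftU_eq_some_iff.1 hf))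
  · refine hU.2.2 _ _ (β + γ) n m i j (fun δ hδ => ?_) (shiftU_eq_some_iff.1 hf) ?_
      (shiftU_eq_some_iff.1 hf')
    · exact concatSeq_congr_of_lt hff' hδ
    · rwa [concatSeq_add_right]

end IsUpdateProc

theorem shifted_procedure_facts_general (α : Ordinal)
    (U : OSeq → Option (Ordinal × ℕ × ℕ)) (hU : IsUpdateProc α U)
    (β : Ordinal) (g : OSeq) :
    IsUpdateProc (α - β) (shiftU U β g) ∧
    ∀ (h : ℕ → ℕ) (f : OSeq),
      shiftU U (β + 1) (concatSeq β g (fun _ => h)) f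
        = shiftU (shiftU U β g) 1 (fun _ => h) f :=
  ⟨hU.shiftU β g, fun h f => by rw [shiftU_shiftU]⟩

/-- Basic facts about the shifted procedure `U_g`: (1) if `U` is an update
procedure of countable ordinal `α` and `g` is a sequence of ordinal `β < α`,
then `U_g` is an update procedure of ordinal `α - β`; (2) for every function
`h : ℕ → ℕ` (viewed as a length-one sequence), `U_{g*h} = (U_g)_h` as maps on
sequences (of ordinal `α - (β + 1)`). -/
theorem shifted_procedure_facts (α : Ordinal)
    (hcount : α.card ≤ Cardinal.aleph0)
    (U : OSeq → Option (Ordinal × ℕ × ℕ)) (hU : IsUpdateProc α U)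
    (β : Ordinal) (hβα : β < α) (g : OSeq) :
    IsUpdateProc (α - β) (shiftU U β g) ∧
    ∀ (h : ℕ → ℕ) (f : OSeq),
      shiftU U (β + 1) (concatSeq β g (fun _ => h)) f
        = shiftU (shiftU U β g) 1 (fun _ => h) f :=
  shifted_procedure_facts_general α U hU β g
end
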